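/- Let P be a real polynomial, let a < b be real numbers, let k ≥ 1 be an integer, and let λ ∈ (0,1). Let q_0, …, q_n denote the coefficients of Q(x) := P(a + (b−a)·x), so that q_i = P^{(i)}(a)·(b−a)^i / i!. If P(a + λ·(b−a)) = 0, then there exists ξ ∈ (a, a + λ(b−a)) such that Σ_{i=0}^{k−1} q_i·λ^i + (P^{(k)}(ξ)·(b−a)^k / k!)·λ^k = 0; in other words, λ is a root of the polynomial F_ξ(x) := Σ_{i=0}^{k−1} q_i·x^i + (P^{(k)}(ξ)·(b−a)^k / k!)·x^k. -/

import Mathlib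

open Polynomial Set Nat

namespace Polynomial

variable {𝕜 : Type*} [NontriviallyNormedField 𝕜]

theorem contDiff_eval (p : 𝕜[X]) (n : WithTop ℕ∞) : ContDiff 𝕜 n fun x => p.eval x :=
  p.contDiff_aeval n

theorem iteratedDeriv_eval (p : 𝕜[X]) (n : ℕ) :
    iteratedDeriv n (fun x => p.eval x) = fun x => (derivative^[n] p).eval x := by
  induction n generalizing p with
  | zero => rfl
  | succ n ih =>
    have hderiv : deriv (fun x => p.eval x) = fun x => p.derivative.eval x := by
      ext x; exact p.deriv
    rw [iteratedDeriv_succ', hderiv, ih, Function.iterate_succ_apply]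

theorem exists_eval_eq_taylor_add_lagrange_remainder (p : ℝ[X]) {x₀ x : ℝ} (hx : x₀ ≠ x)
    (n : ℕ) : ∃ ξ ∈ uIoo x₀ x, p.eval x =
      ∑ i ∈ Finset.range (n + 1), (derivative^[i] p).eval x₀ * (x - x₀) ^ i / i ! +
        (derivative^[n + 1] p).eval ξ * (x - x₀) ^ (n + 1) / (n + 1)! := by
  obtain ⟨ξ, hξ, h⟩ :=
    taylor_mean_remainder_lagrange_iteratedDeriv hx (p.contDiff_eval _).contDiffOn
  refine ⟨ξ, hξ, ?_⟩
  rw [sub_eq_iff_eq_add', iteratedDeriv_eval, taylor_within_apply] at h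
  rw [h]
  congr 1
  refine Finset.sum_congr rfl fun i _ => ?_
  rw [iteratedDerivWithin_eq_iteratedDeriv (uniqueDiffOn_uIcc hx)
    (p.contDiff_eval i).contDiffAt left_mem_uIcc, iteratedDeriv_eval, smul_eq_mul]
  ring

end Polynomial

/-- Lagrange form of the Taylor remainder applied to `Q(x) = P(a + (b-a)x)`: any root
`a + λ(b-a)` of `P` with `λ ∈ (0,1)` yields a `ξ ∈ (a, a + λ(b-a))` such that `λ` is a root
of the degree-`k` truncation `F_ξ`. -/
theorem truncated_taylor_root
    (P : Polynomial ℝ) (a b : ℝ) (hab : a < b) (k : ℕ) (hk : 1 ≤ k)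
    (lam : ℝ) (hlam : lam ∈ Set.Ioo (0 : ℝ) 1)
    (q : ℕ → ℝ)
    (hq : ∀ i, q i = (derivative^[i] P).eval a * (b - a) ^ i / (Nat.factorial i))
    (hroot : P.eval (a + lam * (b - a)) = 0) :
    ∃ ξ ∈ Set.Ioo a (a + lam * (b - a)),
      (∑ i ∈ Finset.range k, q i * lam ^ i)
        + ((derivative^[k] P).eval ξ * (b - a) ^ k / (Nat.factorial k)) * lam ^ k = 0 := by
  obtain ⟨n, rfl⟩ := Nat.exists_eq_add_of_le' hk
  have hac : a < a + lam * (b - a) := lt_add_of_pos_right a (mul_pos hlam.1 (sub_pos.2 hab))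
  obtain ⟨ξ, hξ, htaylor⟩ := P.exists_eval_eq_taylor_add_lagrange_remainder hac.ne n
  rw [uIoo_of_lt hac] at hξ
  refine ⟨ξ, hξ, ?_⟩
  rw [← hroot, htaylor, add_sub_cancel_left]
  simp only [hq, mul_pow]
  congr 1
  · exact Finset.sum_congr rfl fun i _ => by ring
  · ring
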